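/- Let n = 4 in the planar-face configuration, and suppose moreover that A_2 ≠ A_3, A_4 ≠ A_1, B_1 ≠ B_3, and the lines through A_2, A_3 and through A_4, A_1 are distinct and not parallel. Then χ(M) = ∏_{i=1}^4 (a_{i−1},v_i,w_i)/(a_i,v_i,w_i) = 1 (infinitesimal flexibility) if and only if the three lines through B_1 and B_3, through A_2 and A_3, and through A_4 and A_1 have a common point. -/

import Mathlib

open Matrix

/-- The scalar triple product `(a, b, c) = ⟨a, [b, c]⟩` in `ℝ³`. -/
noncomputable def tripleProd (a b c : Fin 3 → ℝ) : ℝ := a ⬝ᵥ crossProduct b c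

/-!
Write `b i = B (i - 1) - B i` for the sides of the planar polygon `B`. The face through `A i`
contains `b i`, and `a i = -(1 - t (i + 1)) • b (i + 1) - t i • b i`, so the `i`-th factor of `χ`
is `t (i - 1) / (1 - t (i + 1))` times `(b (i - 1), v i, w i) / (b (i + 1), v i, w i)`. Because
the sides are coplanar, Cramer's rule rewrites the latter as `-g (i - 1) / g i` with
`g i = (ν, b i, b (i + 1))` the oriented area of the corner at `B i`; this telescopes, and for
`n = 4` one gets `χ = ∏ tᵢ / ∏ (1 - tᵢ)`.

By Menelaus' theorem in the triangles `B₁B₂B₃` and `B₃B₀B₁`, the lines `A₂A₃` and `A₀A₁` meet the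
diagonal `B₁B₃` at the points `X` with `(t₂ + t₃ - 1) • X = t₂t₃ • B₁ - (1 - t₂)(1 - t₃) • B₃` and
`(t₀ + t₁ - 1) • X = t₀t₁ • B₃ - (1 - t₀)(1 - t₁) • B₁`. These two points coincide exactly when
`∏ tᵢ = ∏ (1 - tᵢ)`. In the degenerate case `t₂ + t₃ = 1` this product condition forces
`t₀ + t₁ = 1`, and then both lines are parallel to the diagonal, which is excluded.
-/

section TripleProduct

variable {n x y z v w : Fin 3 → ℝ}

@[simp]
theorem tripleProd_zero_left : tripleProd 0 v w = 0 :=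
  zero_dotProduct _

@[simp]
theorem tripleProd_add_left : tripleProd (x + y) v w = tripleProd x v w + tripleProd y v w :=
  add_dotProduct x y _

@[simp]
theorem tripleProd_sub_left : tripleProd (x - y) v w = tripleProd x v w - tripleProd y v w :=
  sub_dotProduct x y _

@[simp]
theorem tripleProd_neg_left : tripleProd (-x) v w = -tripleProd x v w :=
  neg_dotProduct x _

@[simp]
theorem tripleProd_smul_left (c : ℝ) : tripleProd (c • x) v w = c * tripleProd x v w :=
  smul_dotProduct c x _

theorem tripleProd_eq_zero_of_mem_span (hx : x ∈ Submodule.span ℝ {v, w}) :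
    tripleProd x v w = 0 := by
  obtain ⟨c, d, rfl⟩ := Submodule.mem_span_pair.mp hx
  simp [tripleProd, dot_self_cross, dot_cross_self]

theorem tripleProd_cramer (n x y z : Fin 3 → ℝ) :
    tripleProd n y z • x + tripleProd n z x • y + tripleProd n x y • z = tripleProd x y z • n := by
  ext i
  fin_cases i <;> simp [tripleProd, cross_apply, dotProduct, Fin.sum_univ_three] <;> ring

theorem cross_cross_eq_zero_of_dotProduct_eq_zero (hy : n ⬝ᵥ y = 0) (hz : n ⬝ᵥ z = 0) :
    n ⨯₃ (y ⨯₃ z) = 0 := by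
  rw [cross_cross_eq_smul_sub_smul', hz, dotProduct_comm, hy, zero_smul, zero_smul, sub_zero]

theorem tripleProd_eq_zero_of_dotProduct_eq_zero (hn : n ≠ 0) (hx : n ⬝ᵥ x = 0)
    (hy : n ⬝ᵥ y = 0) (hz : n ⬝ᵥ z = 0) : tripleProd x y z = 0 := by
  have h := cross_cross_eq_smul_sub_smul' x n (y ⨯₃ z)
  rw [cross_cross_eq_zero_of_dotProduct_eq_zero hy hz, map_zero, hx, zero_smul, sub_zero] at h
  exact (smul_eq_zero.mp h.symm).resolve_right hn

theorem tripleProd_cramer_of_dotProduct_eq_zero (hn : n ≠ 0) (hx : n ⬝ᵥ x = 0)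
    (hy : n ⬝ᵥ y = 0) (hz : n ⬝ᵥ z = 0) :
    tripleProd n y z • x + tripleProd n z x • y + tripleProd n x y • z = 0 := by
  rw [tripleProd_cramer, tripleProd_eq_zero_of_dotProduct_eq_zero hn hx hy hz, zero_smul]

theorem tripleProd_ne_zero_of_linearIndependent (hn : n ≠ 0) (hx : n ⬝ᵥ x = 0)
    (hy : n ⬝ᵥ y = 0) (hxy : LinearIndependent ℝ ![x, y]) : tripleProd n x y ≠ 0 := by
  intro h
  have hm : x ⨯₃ y ≠ 0 := crossProduct_ne_zero_iff_linearIndependent.mpr hxy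
  -- `n` is parallel to `x ⨯₃ y`, so Lagrange's identity reads `(n ⬝ᵥ x ⨯₃ y)² = |n|² |x ⨯₃ y|²`.
  have lagrange := cross_dot_cross n (x ⨯₃ y) n (x ⨯₃ y)
  rw [cross_cross_eq_zero_of_dotProduct_eq_zero hx hy, zero_dotProduct,
    dotProduct_comm (x ⨯₃ y) n] at lagrange
  change n ⬝ᵥ x ⨯₃ y = 0 at h
  rw [h, mul_zero, sub_zero] at lagrange
  exact mul_ne_zero (mt dotProduct_self_eq_zero.mp hn) (mt dotProduct_self_eq_zero.mp hm)
    lagrange.symm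

theorem linearIndependent_pair_of_tripleProd (hx : x ≠ 0) (hxvw : tripleProd x v w = 0)
    (hyvw : tripleProd y v w ≠ 0) : LinearIndependent ℝ ![x, y] :=
  (LinearIndependent.pair_iff' hx).mpr fun c hc => hyvw <| by
    rw [← hc, tripleProd_smul_left, hxvw, mul_zero]

end TripleProduct

namespace PlanarFaceMesh

variable {ι : Type*} [AddGroupWithOne ι] {A B a v w : ι → Fin 3 → ℝ} {t : ι → ℝ}
  {ν : Fin 3 → ℝ} {d : ℝ}

def side (B : ι → Fin 3 → ℝ) (i : ι) : Fin 3 → ℝ := B (i - 1) - B i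

noncomputable def cornerArea (ν : Fin 3 → ℝ) (B : ι → Fin 3 → ℝ) (i : ι) : ℝ :=
  tripleProd ν (side B i) (side B (i + 1))

theorem dotProduct_side (hBπ : ∀ i, ν ⬝ᵥ B i = d) (i : ι) : ν ⬝ᵥ side B i = 0 := by
  rw [side, dotProduct_sub, hBπ, hBπ, sub_self]

theorem edge_eq (ha : ∀ i, a i = A (i + 1) - A i)
    (hAt : ∀ i, A i = t i • B (i - 1) + (1 - t i) • B i) (i : ι) :
    a i = -((1 - t (i + 1)) • side B (i + 1)) - t i • side B i := by
  rw [ha, hAt (i + 1), hAt i, side, side, add_sub_cancel_right]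
  module

theorem tripleProd_edge_eq (ha : ∀ i, a i = A (i + 1) - A i)
    (hAt : ∀ i, A i = t i • B (i - 1) + (1 - t i) • B i) {i : ι}
    (hface : tripleProd (side B i) (v i) (w i) = 0) :
    tripleProd (a i) (v i) (w i) =
      -((1 - t (i + 1)) * tripleProd (side B (i + 1)) (v i) (w i)) := by
  simp [edge_eq ha hAt i, hface]

theorem tripleProd_prev_edge_eq (ha : ∀ i, a i = A (i + 1) - A i)
    (hAt : ∀ i, A i = t i • B (i - 1) + (1 - t i) • B i) {i : ι}
    (hface : tripleProd (side B i) (v i) (w i) = 0) :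
    tripleProd (a (i - 1)) (v i) (w i) =
      -(t (i - 1) * tripleProd (side B (i - 1)) (v i) (w i)) := by
  simp [edge_eq ha hAt (i - 1), hface]

theorem tripleProd_next_side_ne_zero (ha : ∀ i, a i = A (i + 1) - A i)
    (hAt : ∀ i, A i = t i • B (i - 1) + (1 - t i) • B i) {i : ι}
    (hface : tripleProd (side B i) (v i) (w i) = 0) (hnext : tripleProd (a i) (v i) (w i) ≠ 0) :
    tripleProd (side B (i + 1)) (v i) (w i) ≠ 0 :=
  right_ne_zero_of_mul <| neg_ne_zero.mp <| tripleProd_edge_eq ha hAt hface ▸ hnext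

theorem linearIndependent_side (ha : ∀ i, a i = A (i + 1) - A i)
    (hAt : ∀ i, A i = t i • B (i - 1) + (1 - t i) • B i) {i : ι}
    (hface : tripleProd (side B i) (v i) (w i) = 0) (hnext : tripleProd (a i) (v i) (w i) ≠ 0)
    (hBB : B (i - 1) ≠ B i) : LinearIndependent ℝ ![side B i, side B (i + 1)] :=
  linearIndependent_pair_of_tripleProd (sub_ne_zero.mpr hBB) hface
    (tripleProd_next_side_ne_zero ha hAt hface hnext)

theorem cornerArea_ne_zero (hν : ν ≠ 0) (hBπ : ∀ i, ν ⬝ᵥ B i = d)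
    (ha : ∀ i, a i = A (i + 1) - A i) (hAt : ∀ i, A i = t i • B (i - 1) + (1 - t i) • B i)
    {i : ι} (hface : tripleProd (side B i) (v i) (w i) = 0)
    (hnext : tripleProd (a i) (v i) (w i) ≠ 0) (hBB : B (i - 1) ≠ B i) :
    cornerArea ν B i ≠ 0 :=
  tripleProd_ne_zero_of_linearIndependent hν (dotProduct_side hBπ i) (dotProduct_side hBπ (i + 1))
    (linearIndependent_side ha hAt hface hnext hBB)

theorem cornerArea_mul_tripleProd_side (hν : ν ≠ 0) (hBπ : ∀ i, ν ⬝ᵥ B i = d) {i : ι}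
    (hface : tripleProd (side B i) (v i) (w i) = 0) :
    cornerArea ν B i * tripleProd (side B (i - 1)) (v i) (w i) =
      -(cornerArea ν B (i - 1) * tripleProd (side B (i + 1)) (v i) (w i)) := by
  have h := congrArg (tripleProd · (v i) (w i)) <| tripleProd_cramer_of_dotProduct_eq_zero hν
    (dotProduct_side hBπ (i - 1)) (dotProduct_side hBπ i) (dotProduct_side hBπ (i + 1))
  simp only [tripleProd_add_left, tripleProd_smul_left, tripleProd_zero_left, hface] at h
  rw [cornerArea, cornerArea, sub_add_cancel]
  linear_combination h

theorem tripleProd_div_eq (hν : ν ≠ 0) (hBπ : ∀ i, ν ⬝ᵥ B i = d)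
    (ha : ∀ i, a i = A (i + 1) - A i) (hAt : ∀ i, A i = t i • B (i - 1) + (1 - t i) • B i)
    {i : ι} (hface : tripleProd (side B i) (v i) (w i) = 0)
    (hnext : tripleProd (a i) (v i) (w i) ≠ 0) (hBB : B (i - 1) ≠ B i) :
    tripleProd (a (i - 1)) (v i) (w i) / tripleProd (a i) (v i) (w i) =
      t (i - 1) * -(cornerArea ν B (i - 1) / cornerArea ν B i) / (1 - t (i + 1)) := by
  have hcorner := cornerArea_ne_zero hν hBπ ha hAt hface hnext hBB
  have hside := tripleProd_next_side_ne_zero ha hAt hface hnext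
  have hcorner_mul := cornerArea_mul_tripleProd_side hν hBπ hface
  rw [tripleProd_prev_edge_eq ha hAt hface, tripleProd_edge_eq ha hAt hface]
  field_simp
  linear_combination t (i - 1) / (1 - t (i + 1)) * hcorner_mul

theorem prod_tripleProd_div_eq [Fintype ι] (hν : ν ≠ 0) (hBπ : ∀ i, ν ⬝ᵥ B i = d)
    (ha : ∀ i, a i = A (i + 1) - A i) (hAt : ∀ i, A i = t i • B (i - 1) + (1 - t i) • B i)
    (hface : ∀ i, tripleProd (side B i) (v i) (w i) = 0)
    (hnext : ∀ i, tripleProd (a i) (v i) (w i) ≠ 0) (hBB : ∀ i, B (i - 1) ≠ B i) :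
    ∏ i, tripleProd (a (i - 1)) (v i) (w i) / tripleProd (a i) (v i) (w i) =
      (-1) ^ Fintype.card ι * (∏ i, t i) / ∏ i, (1 - t i) := by
  have prod_sub_one (f : ι → ℝ) : ∏ i, f (i - 1) = ∏ i, f i :=
    Equiv.prod_comp (Equiv.subRight 1) f
  have prod_add_one (f : ι → ℝ) : ∏ i, f (i + 1) = ∏ i, f i :=
    Equiv.prod_comp (Equiv.addRight 1) f
  have hcorner : ∏ i, cornerArea ν B i ≠ 0 := Finset.prod_ne_zero_iff.mpr fun i _ =>
    cornerArea_ne_zero hν hBπ ha hAt (hface i) (hnext i) (hBB i)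
  rw [Finset.prod_congr rfl fun i _ => tripleProd_div_eq hν hBπ ha hAt (hface i) (hnext i) (hBB i),
    Finset.prod_div_distrib, Finset.prod_mul_distrib, Finset.prod_neg, Finset.prod_div_distrib,
    prod_sub_one t, prod_sub_one (cornerArea ν B), prod_add_one (1 - t ·), div_self hcorner,
    Finset.card_univ]
  ring

end PlanarFaceMesh

open scoped Affine

section Menelaus

variable {k V : Type*} [Field k] [AddCommGroup V] [Module k V] {P Q R X : V} {t t' : k}

theorem smul_eq_of_mem_affineSpan_pair (hPQR : LinearIndependent k ![P - Q, Q - R])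
    (hPR : X ∈ line[k, P, R]) (hUW : X ∈ line[k, t • P + (1 - t) • Q, t' • Q + (1 - t') • R]) :
    (t + t' - 1) • X = (t * t') • P - ((1 - t) * (1 - t')) • R := by
  obtain ⟨s, rfl⟩ := mem_affineSpan_pair_iff_exists_lineMap_eq.mp hPR
  obtain ⟨r, hr⟩ := mem_affineSpan_pair_iff_exists_lineMap_eq.mp hUW
  obtain ⟨h₁, h₂⟩ := LinearIndependent.pair_iff.mp hPQR ((1 - r) * t - (1 - s))
    ((1 - r) * t - (1 - s) + (1 - r) * (1 - t) + r * t') <| by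
      rw [← sub_eq_zero_of_eq hr]
      simp only [AffineMap.lineMap_apply_module]
      module
  simp only [AffineMap.lineMap_apply_module]
  match_scalars
  · linear_combination -(t + t' - 1) * h₁ - t * (h₂ - h₁)
  · linear_combination (t + t' - 1) * h₁ + t * (h₂ - h₁)

theorem mem_affineSpan_pair_of_smul_eq (ht : t + t' - 1 ≠ 0)
    (hX : (t + t' - 1) • X = (t * t') • P - ((1 - t) * (1 - t')) • R) :
    X ∈ line[k, P, R] ∧ X ∈ line[k, t • P + (1 - t) • Q, t' • Q + (1 - t') • R] := by
  refine ⟨mem_affineSpan_pair_iff_exists_lineMap_eq.mpr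
      ⟨-((1 - t) * (1 - t')) / (t + t' - 1), ?_⟩,
    mem_affineSpan_pair_iff_exists_lineMap_eq.mpr ⟨(t - 1) / (t + t' - 1), ?_⟩⟩ <;>
  · apply smul_right_injective V ht
    simp only [AffineMap.lineMap_apply_module, hX]
    match_scalars <;> field_simp <;> ring

theorem affineSpan_pair_parallel_of_add_eq_one (ht : t ≠ 0) (htt' : t + t' = 1) :
    line[k, t • P + (1 - t) • Q, t' • Q + (1 - t') • R] ∥ line[k, P, R] := by
  obtain rfl : t' = 1 - t := by linear_combination htt'
  refine AffineSubspace.affineSpan_pair_parallel_iff_exists_unit_smul.mpr ⟨Units.mk0 t ht, ?_⟩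
  simp only [Units.smul_mk0, vsub_eq_sub]
  module

theorem prod_eq_of_concurrent {B₀ B₁ B₂ B₃ X : V} {t₀ t₁ t₂ t₃ : k}
    (h123 : LinearIndependent k ![B₁ - B₂, B₂ - B₃])
    (h301 : LinearIndependent k ![B₃ - B₀, B₀ - B₁]) (hB13 : B₁ ≠ B₃)
    (h13 : X ∈ line[k, B₁, B₃])
    (h23 : X ∈ line[k, t₂ • B₁ + (1 - t₂) • B₂, t₃ • B₂ + (1 - t₃) • B₃])
    (h01 : X ∈ line[k, t₀ • B₃ + (1 - t₀) • B₀, t₁ • B₀ + (1 - t₁) • B₁]) :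
    t₀ * t₁ * t₂ * t₃ = (1 - t₀) * (1 - t₁) * (1 - t₂) * (1 - t₃) := by
  have e23 := smul_eq_of_mem_affineSpan_pair h123 h13 h23
  have e01 := smul_eq_of_mem_affineSpan_pair h301 (Set.pair_comm B₁ B₃ ▸ h13) h01
  have key : (t₀ * t₁ * t₂ * t₃ - (1 - t₀) * (1 - t₁) * (1 - t₂) * (1 - t₃)) • (B₁ - B₃) = 0 := by
    linear_combination (norm := module) (t₂ + t₃ - 1) • e01 - (t₀ + t₁ - 1) • e23
  rw [smul_eq_zero, sub_eq_zero, sub_eq_zero] at key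
  exact key.resolve_right hB13

theorem exists_concurrent_of_prod_eq {B₀ B₁ B₂ B₃ : V} {t₀ t₁ t₂ t₃ : k}
    (ht₀ : t₀ ≠ 0) (ht₁ : t₁ ≠ 0) (ht₂ : t₂ ≠ 0) (ht₃ : t₃ ≠ 0)
    (hnp : ¬ line[k, t₂ • B₁ + (1 - t₂) • B₂, t₃ • B₂ + (1 - t₃) • B₃] ∥
      line[k, t₀ • B₃ + (1 - t₀) • B₀, t₁ • B₀ + (1 - t₁) • B₁])
    (hTS : t₀ * t₁ * t₂ * t₃ = (1 - t₀) * (1 - t₁) * (1 - t₂) * (1 - t₃)) :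
    ∃ X, X ∈ line[k, B₁, B₃] ∧
      X ∈ line[k, t₂ • B₁ + (1 - t₂) • B₂, t₃ • B₂ + (1 - t₃) • B₃] ∧
      X ∈ line[k, t₀ • B₃ + (1 - t₀) • B₀, t₁ • B₀ + (1 - t₁) • B₁] := by
  by_cases h23 : t₂ + t₃ = 1
  · have h01 : t₀ + t₁ = 1 := by
      have : t₂ * t₃ * (t₀ + t₁ - 1) = 0 := by
        linear_combination hTS - (1 - t₀) * (1 - t₁) * h23
      simpa [ht₂, ht₃, sub_eq_zero] using this
    have h31 := affineSpan_pair_parallel_of_add_eq_one (P := B₃) (Q := B₀) (R := B₁) ht₀ h01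
    rw [Set.pair_comm B₃ B₁] at h31
    exact (hnp ((affineSpan_pair_parallel_of_add_eq_one ht₂ h23).trans h31.symm)).elim
  have hc23 : t₂ + t₃ - 1 ≠ 0 := sub_ne_zero.mpr h23
  have hc01 : t₀ + t₁ - 1 ≠ 0 := by
    refine sub_ne_zero.mpr fun h01 => h23 ?_
    have : t₁ * t₀ * (t₂ + t₃ - 1) = 0 := by
      linear_combination hTS + (t₂ + t₃ - 1 - t₂ * t₃) * h01
    simpa [ht₀, ht₁, sub_eq_zero] using this
  set X := (t₂ + t₃ - 1)⁻¹ • ((t₂ * t₃) • B₁ - ((1 - t₂) * (1 - t₃)) • B₃)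
  obtain ⟨h13, h23⟩ := mem_affineSpan_pair_of_smul_eq (P := B₁) (Q := B₂) (R := B₃) hc23
    (smul_inv_smul₀ hc23 _)
  have e01 : (t₀ + t₁ - 1) • X = (t₀ * t₁) • B₃ - ((1 - t₀) * (1 - t₁)) • B₁ := by
    apply smul_right_injective V hc23
    dsimp only
    rw [smul_comm, smul_inv_smul₀ hc23]
    match_scalars
    · linear_combination hTS
    · linear_combination -hTS
  exact ⟨X, h13, h23, (mem_affineSpan_pair_of_smul_eq (Q := B₀) hc01 e01).2⟩

theorem quadrilateral_concurrent_iff {A B : ZMod 4 → V} {t : ZMod 4 → k}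
    (hAt : ∀ i, A i = t i • B (i - 1) + (1 - t i) • B i)
    (h123 : LinearIndependent k ![B 1 - B 2, B 2 - B 3])
    (h301 : LinearIndependent k ![B 3 - B 0, B 0 - B 1])
    (hB13 : B 1 ≠ B 3) (ht : ∀ i, t i ≠ 0)
    (hnp : ¬ line[k, A 2, A 3] ∥ line[k, A 0, A 1]) :
    ∏ i, t i = ∏ i, (1 - t i) ↔
      ∃ X, X ∈ line[k, B 1, B 3] ∧ X ∈ line[k, A 2, A 3] ∧ X ∈ line[k, A 0, A 1] := by
  rw [show ∏ i, t i = t 0 * t 1 * t 2 * t 3 from Fin.prod_univ_four t,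
    show ∏ i, (1 - t i) = (1 - t 0) * (1 - t 1) * (1 - t 2) * (1 - t 3) from
      Fin.prod_univ_four (1 - t ·)]
  rw [show A 0 = t 0 • B 3 + (1 - t 0) • B 0 from hAt 0,
    show A 1 = t 1 • B 0 + (1 - t 1) • B 1 from hAt 1,
    show A 2 = t 2 • B 1 + (1 - t 2) • B 2 from hAt 2,
    show A 3 = t 3 • B 2 + (1 - t 3) • B 3 from hAt 3] at hnp ⊢
  exact ⟨exists_concurrent_of_prod_eq (ht 0) (ht 1) (ht 2) (ht 3) hnp,
    fun ⟨_, h13, h23, h01⟩ => prod_eq_of_concurrent h123 h301 hB13 h13 h23 h01⟩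

end Menelaus

theorem stmt9_general
    (A B v w : ZMod 4 → (Fin 3 → ℝ)) (t : ZMod 4 → ℝ)
    (a : ZMod 4 → (Fin 3 → ℝ)) (ha : ∀ i, a i = A (i + 1) - A i)
    -- all the points `Aᵢ`, `Bᵢ` lie in a common affine plane `π = {x | ⟨ν, x⟩ = d}`
    (ν : Fin 3 → ℝ) (d : ℝ) (hν : ν ≠ 0)
    (hBπ : ∀ i, ν ⬝ᵥ B i = d)
    (hnext : ∀ i, tripleProd (a i) (v i) (w i) ≠ 0)
    (hBs0 : ∀ i, B (i - 1) - A i ∈ Submodule.span ℝ ({v i, w i} : Set (Fin 3 → ℝ)))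
    (hBs1 : ∀ i, B i - A i ∈ Submodule.span ℝ ({v i, w i} : Set (Fin 3 → ℝ)))
    (hBB : ∀ i, B (i - 1) ≠ B i)
    (ht0 : ∀ i, t i ≠ 0) (ht1 : ∀ i, t i ≠ 1)
    (hAt : ∀ i, A i = t i • B (i - 1) + (1 - t i) • B i)
    -- additional general position assumptions
    (hB13 : B 1 ≠ B 3)
    (hnp : ¬ AffineSubspace.Parallel
      (affineSpan ℝ ({A 2, A 3} : Set (Fin 3 → ℝ)))
      (affineSpan ℝ ({A 4, A 1} : Set (Fin 3 → ℝ)))) :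
    ∏ i : ZMod 4, tripleProd (a (i - 1)) (v i) (w i) / tripleProd (a i) (v i) (w i) = 1
    ↔ ∃ P : Fin 3 → ℝ,
        P ∈ affineSpan ℝ ({B 1, B 3} : Set (Fin 3 → ℝ)) ∧
        P ∈ affineSpan ℝ ({A 2, A 3} : Set (Fin 3 → ℝ)) ∧
        P ∈ affineSpan ℝ ({A 4, A 1} : Set (Fin 3 → ℝ)) := by
  have hface (i : ZMod 4) : tripleProd (PlanarFaceMesh.side B i) (v i) (w i) = 0 :=
    tripleProd_eq_zero_of_mem_span <| by
      simpa [PlanarFaceMesh.side] using sub_mem (hBs0 i) (hBs1 i)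
  have hind (i : ZMod 4) : LinearIndependent ℝ ![B (i - 1) - B i, B i - B (i + 1)] := by
    simpa only [PlanarFaceMesh.side, add_sub_cancel_right] using
      PlanarFaceMesh.linearIndependent_side ha hAt (hface i) (hnext i) (hBB i)
  have hS : ∏ i, (1 - t i) ≠ 0 :=
    Finset.prod_ne_zero_iff.mpr fun i _ => sub_ne_zero.mpr (ht1 i).symm
  rw [PlanarFaceMesh.prod_tripleProd_div_eq hν hBπ ha hAt hface hnext hBB, ZMod.card,
    Even.neg_one_pow ⟨2, rfl⟩, one_mul, div_eq_one_iff_eq hS]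
  exact quadrilateral_concurrent_iff hAt (hind 2) (hind 0) hB13 ht0 hnp

/-- **Infinitesimal flexibility of a (3×3)-mesh with planar faces.**
For `n = 4`, `χ(M) = 1` iff the lines `B₁B₃`, `A₂A₃` and `A₄A₁` are concurrent
(Desargues configuration). -/
theorem stmt9
    (A B v w : ZMod 4 → (Fin 3 → ℝ)) (t : ZMod 4 → ℝ)
    (a : ZMod 4 → (Fin 3 → ℝ)) (ha : ∀ i, a i = A (i + 1) - A i)
    -- all the points `Aᵢ`, `Bᵢ` lie in a common affine plane `π = {x | ⟨ν, x⟩ = d}`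
    (ν : Fin 3 → ℝ) (d : ℝ) (hν : ν ≠ 0)
    (hAπ : ∀ i, ν ⬝ᵥ A i = d) (hBπ : ∀ i, ν ⬝ᵥ B i = d)
    (hvw : ∀ i, LinearIndependent ℝ ![v i, w i])
    (hprev : ∀ i, tripleProd (a (i - 1)) (v i) (w i) ≠ 0)
    (hnext : ∀ i, tripleProd (a i) (v i) (w i) ≠ 0)
    (hBv0 : ∀ i, B (i - 1) - A i ≠ 0) (hBv1 : ∀ i, B i - A i ≠ 0)
    (hBs0 : ∀ i, B (i - 1) - A i ∈ Submodule.span ℝ ({v i, w i} : Set (Fin 3 → ℝ)))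
    (hBs1 : ∀ i, B i - A i ∈ Submodule.span ℝ ({v i, w i} : Set (Fin 3 → ℝ)))
    (hBB : ∀ i, B (i - 1) ≠ B i)
    (ht0 : ∀ i, t i ≠ 0) (ht1 : ∀ i, t i ≠ 1)
    (hAt : ∀ i, A i = t i • B (i - 1) + (1 - t i) • B i)
    -- additional general position assumptions
    (hA23 : A 2 ≠ A 3) (hA41 : A 4 ≠ A 1) (hB13 : B 1 ≠ B 3)
    (hlines_ne : affineSpan ℝ ({A 2, A 3} : Set (Fin 3 → ℝ)) ≠
      affineSpan ℝ ({A 4, A 1} : Set (Fin 3 → ℝ)))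
    (hnp : ¬ AffineSubspace.Parallel
      (affineSpan ℝ ({A 2, A 3} : Set (Fin 3 → ℝ)))
      (affineSpan ℝ ({A 4, A 1} : Set (Fin 3 → ℝ)))) :
    ∏ i : ZMod 4, tripleProd (a (i - 1)) (v i) (w i) / tripleProd (a i) (v i) (w i) = 1
    ↔ ∃ P : Fin 3 → ℝ,
        P ∈ affineSpan ℝ ({B 1, B 3} : Set (Fin 3 → ℝ)) ∧
        P ∈ affineSpan ℝ ({A 2, A 3} : Set (Fin 3 → ℝ)) ∧
        P ∈ affineSpan ℝ ({A 4, A 1} : Set (Fin 3 → ℝ)) :=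
  stmt9_general A B v w t a ha ν d hν hBπ hnext hBs0 hBs1 hBB ht0 ht1 hAt hB13 hnp
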